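/- arXiv:1606.07778 — 4 statements merged into one kernel-verified Lean document; each statement's English description precedes it below -/
import Mathlib

section
/- Let G be a Garside group and let u, v ∈ G⁰ (elements with inf(x) = 0) with r = sup(u) ≥ 1. For 0 ≤ k ≤ r, let φ_k denote the product of the rightmost k factors of the right normal form of u. Then inf(uv) = max{ k ∈ {0,…,r} : ∂φ_k ≼ v }, where ∂s = s⁻¹Δ^{sup(s)} is the right complement. -/
/-- A finite-type Garside structure on a group `G`. -/
structure GarsideStructure (G : Type*) [Group G] where
  /-- the submonoid of positive elements -/
  P : Submonoid G
  /-- the Garside element -/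
  Δ : G
  delta_pos : Δ ∈ P
  pos_antisymm : ∀ x : G, x ∈ P → x⁻¹ ∈ P → x = 1
  /-- gcd for the prefix order -/
  wedge : G → G → G
  /-- lcm for the prefix order -/
  vee : G → G → G
  wedge_le_left : ∀ x y, (wedge x y)⁻¹ * x ∈ P
  wedge_le_right : ∀ x y, (wedge x y)⁻¹ * y ∈ P
  le_wedge : ∀ x y z, z⁻¹ * x ∈ P → z⁻¹ * y ∈ P → z⁻¹ * wedge x y ∈ P
  left_le_vee : ∀ x y, x⁻¹ * vee x y ∈ P
  right_le_vee : ∀ x y, y⁻¹ * vee x y ∈ P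
  vee_le : ∀ x y z, x⁻¹ * z ∈ P → y⁻¹ * z ∈ P → (vee x y)⁻¹ * z ∈ P
  /-- gcd for the suffix order -/
  rwedge : G → G → G
  /-- lcm for the suffix order -/
  rvee : G → G → G
  rwedge_le_left : ∀ x y, x * (rwedge x y)⁻¹ ∈ P
  rwedge_le_right : ∀ x y, y * (rwedge x y)⁻¹ ∈ P
  le_rwedge : ∀ x y z, x * z⁻¹ ∈ P → y * z⁻¹ ∈ P → rwedge x y * z⁻¹ ∈ P
  left_le_rvee : ∀ x y, rvee x y * x⁻¹ ∈ P
  right_le_rvee : ∀ x y, rvee x y * y⁻¹ ∈ P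
  rvee_le : ∀ x y z, z * x⁻¹ ∈ P → z * y⁻¹ ∈ P → z * (rvee x y)⁻¹ ∈ P
  /-- the set of simple elements is finite -/
  simples_finite : {s : G | s ∈ P ∧ s⁻¹ * Δ ∈ P}.Finite
  /-- the simple elements generate the group -/
  simples_generate : Subgroup.closure {s : G | s ∈ P ∧ s⁻¹ * Δ ∈ P} = ⊤
  /-- conjugation by `Δ` preserves `P` -/
  conj_delta : ∀ x : G, x ∈ P ↔ Δ⁻¹ * x * Δ ∈ P
  /-- `P` is noetherian -/
  noetherian : ∀ x ∈ P, x ≠ 1 →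
    ∃ N : ℕ, ∀ l : List G, (∀ a ∈ l, a ∈ P ∧ a ≠ 1) → l.prod = x → l.length ≤ N

namespace GarsideStructure

variable {G : Type*} [Group G] (g : GarsideStructure G)

/-- the prefix order -/
def le (x y : G) : Prop := x⁻¹ * y ∈ g.P

/-- the suffix order: `rle x y` means `x ≽ y`, i.e. `y` is a suffix of `x` -/
def rle (x y : G) : Prop := x * y⁻¹ ∈ g.P

/-- `IsInf x k` : `k` is the infimum of `x`, `max {j : Δ^j ≼ x}` -/
def IsInf (x : G) (k : ℤ) : Prop := g.le (g.Δ ^ k) x ∧ ∀ j : ℤ, g.le (g.Δ ^ j) x → j ≤ k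

/-- `IsSup x k` : `k` is the supremum of `x`, `min {j : x ≼ Δ^j}` -/
def IsSup (x : G) (k : ℤ) : Prop := g.le x (g.Δ ^ k) ∧ ∀ j : ℤ, g.le x (g.Δ ^ j) → k ≤ j

/-- an element of a Garside group is absorbable -/
def Absorbable (y : G) : Prop :=
  (g.IsInf y 0 ∨ g.IsSup y 0) ∧
  ∃ (x : G) (i s : ℤ), g.IsInf x i ∧ g.IsSup x s ∧ g.IsInf (x * y) i ∧ g.IsSup (x * y) s

/-- simple elements: positive prefixes of `Δ` -/
def Simple (s : G) : Prop := s ∈ g.P ∧ g.le s g.Δ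

/-- atoms: minimal nontrivial positive elements -/
def Atom (a : G) : Prop := a ∈ g.P ∧ a ≠ 1 ∧ ∀ u v : G, u ∈ g.P → v ∈ g.P → u * v = a → u = 1 ∨ v = 1

/-- `(s,t)` is left-weighted: `∂s ∧ t = 1` -/
def LeftWeighted (s t : G) : Prop :=
  g.Simple s ∧ g.Simple t ∧ g.wedge (s⁻¹ * g.Δ) t = 1

/-- `(s,t)` is right-weighted: `s ∧^Lsh ∂⁻¹t = 1` -/
def RightWeighted (s t : G) : Prop :=
  g.Simple s ∧ g.Simple t ∧ g.rwedge s (g.Δ * t⁻¹) = 1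

/-- `l` is the left normal form (of the element `l.prod`, which has infimum `0`) -/
def IsLNF (l : List G) : Prop :=
  (∀ s ∈ l, g.Simple s ∧ s ≠ 1) ∧ l.Chain' g.LeftWeighted ∧ ∀ h ∈ l.head?, h ≠ g.Δ

/-- `l` is the right normal form, written in product order (`u = s'_r ⋯ s'_1` corresponds
to the list `[s'_r, …, s'_1]`); the last pair condition says `s'_1 ≠ Δ`. -/
def IsRNF (l : List G) : Prop :=
  (∀ s ∈ l, g.Simple s ∧ s ≠ 1) ∧ l.Chain' g.RightWeighted ∧ ∀ h ∈ l.getLast?, h ≠ g.Δ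

/-- the vertex set of the additional length graph: left cosets `gΔ^ℤ` -/
abbrev ALVertex := G ⧸ Subgroup.zpowers g.Δ

/-- one coset can be reached from the other by multiplying the distinguished
representative by a nontrivial proper simple element or by an absorbable element -/
def ALStep (v w : G ⧸ Subgroup.zpowers g.Δ) : Prop :=
  ∃ d : G, g.IsInf d 0 ∧ (d : G ⧸ Subgroup.zpowers g.Δ) = v ∧
    ((∃ s : G, g.Simple s ∧ s ≠ 1 ∧ s ≠ g.Δ ∧ ((d * s : G) : G ⧸ Subgroup.zpowers g.Δ) = w) ∨
     (∃ y : G, g.Absorbable y ∧ ((d * y : G) : G ⧸ Subgroup.zpowers g.Δ) = w))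

/-- the additional length graph -/
def ALGraph : SimpleGraph (G ⧸ Subgroup.zpowers g.Δ) where
  Adj v w := v ≠ w ∧ (g.ALStep v w ∨ g.ALStep w v)
  symm := by constructor; intro v w h; exact ⟨Ne.symm h.1, h.2.symm⟩
  loopless := by constructor; intro v h; exact h.1 rfl

end GarsideStructure
namespace GarsideStructure

variable {G : Type*} [Group G] (g : GarsideStructure G)

lemma memP_of_eq {a b : G} (h : a = b) (hb : b ∈ g.P) : a ∈ g.P := h ▸ hb

/-- conjugation by `Δ` preserves `P`, reverse form -/
lemma conj_delta_inv (x : G) : x ∈ g.P ↔ g.Δ * x * g.Δ⁻¹ ∈ g.P := by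
  constructor
  · intro hx
    exact (g.conj_delta (g.Δ * x * g.Δ⁻¹)).mpr (g.memP_of_eq (by group) hx)
  · intro hx
    have := (g.conj_delta (g.Δ * x * g.Δ⁻¹)).mp hx
    exact g.memP_of_eq (by group) this

lemma conj_zpow (k : ℤ) (x : G) : x ∈ g.P ↔ (g.Δ ^ k)⁻¹ * x * g.Δ ^ k ∈ g.P := by
  induction k using Int.induction_on with
  | zero => simp
  | succ n ih =>
    rw [ih, g.conj_delta ((g.Δ ^ (n : ℤ))⁻¹ * x * g.Δ ^ (n : ℤ))]
    constructor
    · intro h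
      exact g.memP_of_eq (by rw [zpow_add, zpow_one]; group) h
    · intro h
      refine g.memP_of_eq ?_ h
      rw [zpow_add, zpow_one]; group
  | pred n ih =>
    rw [ih, g.conj_delta_inv ((g.Δ ^ (-(n : ℤ)))⁻¹ * x * g.Δ ^ (-(n : ℤ)))]
    constructor
    · intro h
      refine g.memP_of_eq ?_ h
      rw [show (-(n : ℤ) - 1) = -(n : ℤ) + (-1) from by ring, zpow_add, zpow_neg_one]; group
    · intro h
      refine g.memP_of_eq ?_ h
      rw [show (-(n : ℤ) - 1) = -(n : ℤ) + (-1) from by ring, zpow_add, zpow_neg_one]; group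

/-- Key two-factor lemma: if the pair `(t₂, t₁)` is right-weighted and `Δ ≼ t₂ t₁ x`
with `x` positive, then `Δ ≼ t₁ x`. -/
lemma lemA {t₂ t₁ : G} (hrw : g.RightWeighted t₂ t₁) {x : G} (hx : x ∈ g.P)
    (hd : g.Δ⁻¹ * (t₂ * (t₁ * x)) ∈ g.P) : g.Δ⁻¹ * (t₁ * x) ∈ g.P := by
  obtain ⟨⟨ht₂P, ht₂Δ⟩, ⟨ht₁P, ht₁Δ⟩, hw0⟩ := hrw
  set c := g.wedge x (t₁⁻¹ * g.Δ) with hc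
  set w := g.wedge g.Δ (t₁ * x) with hwdef
  have hc1 : c⁻¹ * x ∈ g.P := g.wedge_le_left x (t₁⁻¹ * g.Δ)
  have hc2 : c⁻¹ * (t₁⁻¹ * g.Δ) ∈ g.P := g.wedge_le_right x (t₁⁻¹ * g.Δ)
  have h1 : (t₂⁻¹ * g.Δ)⁻¹ * g.Δ ∈ g.P :=
    g.memP_of_eq (by group) ((g.conj_delta t₂).mp ht₂P)
  have h2 : (t₂⁻¹ * g.Δ)⁻¹ * (t₁ * x) ∈ g.P := g.memP_of_eq (by group) hd
  have h3 : (t₂⁻¹ * g.Δ)⁻¹ * w ∈ g.P := g.le_wedge _ _ _ h1 h2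
  have h4 : t₁⁻¹ * w ∈ g.P :=
    g.le_wedge _ _ _ ht₁Δ (g.memP_of_eq (by group) hx)
  have h5 : (t₁⁻¹ * w)⁻¹ * x ∈ g.P :=
    g.memP_of_eq (by rw [hwdef]; group) (g.wedge_le_right g.Δ (t₁ * x))
  have h6 : (t₁⁻¹ * w)⁻¹ * (t₁⁻¹ * g.Δ) ∈ g.P :=
    g.memP_of_eq (by rw [hwdef]; group) (g.wedge_le_left g.Δ (t₁ * x))
  have h7 : (t₁⁻¹ * w)⁻¹ * c ∈ g.P := g.le_wedge _ _ _ h5 h6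
  have h8 : g.Δ⁻¹ * t₂ * t₁ * c ∈ g.P :=
    g.memP_of_eq (show g.Δ⁻¹ * t₂ * t₁ * c
        = ((t₂⁻¹ * g.Δ)⁻¹ * w) * ((t₁⁻¹ * w)⁻¹ * c) from by group) (mul_mem h3 h7)
  have hcP : c ∈ g.P := by
    have := g.le_wedge x (t₁⁻¹ * g.Δ) 1 (g.memP_of_eq (by group) hx)
      (g.memP_of_eq (by group) ht₁Δ)
    simpa using this
  set w2 := g.Δ * c⁻¹ * t₁⁻¹ with hw2
  have hA : t₂ * w2⁻¹ ∈ g.P := by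
    have := (g.conj_delta_inv (g.Δ⁻¹ * t₂ * t₁ * c)).mp h8
    exact g.memP_of_eq (by rw [hw2]; group) this
  have hB : (g.Δ * t₁⁻¹) * w2⁻¹ ∈ g.P := by
    have := (g.conj_delta_inv c).mp hcP
    exact g.memP_of_eq (by rw [hw2]; group) this
  have hC : w2⁻¹ ∈ g.P := by
    have := g.le_rwedge t₂ (g.Δ * t₁⁻¹) w2 hA hB
    rwa [hw0, one_mul] at this
  have hw2P : w2 ∈ g.P := by
    have := (g.conj_delta_inv (c⁻¹ * (t₁⁻¹ * g.Δ))).mp hc2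
    exact g.memP_of_eq (by rw [hw2]; group) this
  have hw21 : w2 = 1 := g.pos_antisymm w2 hw2P hC
  have hΔ : g.Δ = t₁ * c := by
    have h0 : g.Δ * c⁻¹ * t₁⁻¹ = 1 := hw21
    have : g.Δ = (g.Δ * c⁻¹ * t₁⁻¹) * (t₁ * c) := by group
    rw [this, h0, one_mul]
  exact g.memP_of_eq (show g.Δ⁻¹ * (t₁ * x) = c⁻¹ * x from by rw [hΔ]; group) hc1

/-- `τ` preserves right-weightedness -/
lemma lemTau {s t : G} (h : g.RightWeighted s t) :
    g.RightWeighted (g.Δ⁻¹ * s * g.Δ) (g.Δ⁻¹ * t * g.Δ) := by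
  obtain ⟨⟨hsP, hsΔ⟩, ⟨htP, htΔ⟩, hw0⟩ := h
  have tsim : ∀ a : G, a ∈ g.P → a⁻¹ * g.Δ ∈ g.P → g.Simple (g.Δ⁻¹ * a * g.Δ) := by
    intro a haP haΔ
    refine ⟨(g.conj_delta a).mp haP, ?_⟩
    exact g.memP_of_eq (show (g.Δ⁻¹ * a * g.Δ)⁻¹ * g.Δ = g.Δ⁻¹ * (a⁻¹ * g.Δ) * g.Δ from by group)
      ((g.conj_delta _).mp haΔ)
  refine ⟨tsim s hsP hsΔ, tsim t htP htΔ, ?_⟩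
  have harg : g.Δ * (g.Δ⁻¹ * t * g.Δ)⁻¹ = t⁻¹ * g.Δ := by group
  show g.rwedge (g.Δ⁻¹ * s * g.Δ) (g.Δ * (g.Δ⁻¹ * t * g.Δ)⁻¹) = 1
  rw [harg]
  set w := g.rwedge (g.Δ⁻¹ * s * g.Δ) (t⁻¹ * g.Δ) with hwdef
  have hτs : g.Δ⁻¹ * s * g.Δ ∈ g.P := (g.conj_delta s).mp hsP
  have hwP : w ∈ g.P := by
    have h0 := g.le_rwedge (g.Δ⁻¹ * s * g.Δ) (t⁻¹ * g.Δ) 1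
      (g.memP_of_eq (by group) hτs) (g.memP_of_eq (by group) htΔ)
    rw [← hwdef] at h0
    simpa using h0
  have hσwP : g.Δ * w * g.Δ⁻¹ ∈ g.P := (g.conj_delta_inv w).mp hwP
  have hA : s * (g.Δ * w * g.Δ⁻¹)⁻¹ ∈ g.P := by
    have h0 := g.rwedge_le_left (g.Δ⁻¹ * s * g.Δ) (t⁻¹ * g.Δ)
    rw [← hwdef] at h0
    exact g.memP_of_eq (by group) ((g.conj_delta_inv _).mp h0)
  have hB : (g.Δ * t⁻¹) * (g.Δ * w * g.Δ⁻¹)⁻¹ ∈ g.P := by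
    have h0 := g.rwedge_le_right (g.Δ⁻¹ * s * g.Δ) (t⁻¹ * g.Δ)
    rw [← hwdef] at h0
    exact g.memP_of_eq (by group) ((g.conj_delta_inv _).mp h0)
  have hC : (g.Δ * w * g.Δ⁻¹)⁻¹ ∈ g.P := by
    have h0 := g.le_rwedge s (g.Δ * t⁻¹) (g.Δ * w * g.Δ⁻¹) hA hB
    rwa [hw0, one_mul] at h0
  have h1 : g.Δ * w * g.Δ⁻¹ = 1 := g.pos_antisymm _ hσwP hC
  have h2 : w = g.Δ⁻¹ * (g.Δ * w * g.Δ⁻¹) * g.Δ := by group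
  rw [h2, h1]; group

/-- iterated `τ` preserves right-weightedness -/
lemma lemTauPow (n : ℕ) {s t : G} (h : g.RightWeighted s t) :
    g.RightWeighted ((g.Δ ^ n)⁻¹ * s * g.Δ ^ n) ((g.Δ ^ n)⁻¹ * t * g.Δ ^ n) := by
  induction n with
  | zero => simpa using h
  | succ k ih =>
    have h2 := g.lemTau ih
    have e : ∀ a : G, g.Δ⁻¹ * ((g.Δ ^ k)⁻¹ * a * g.Δ ^ k) * g.Δ
        = (g.Δ ^ (k + 1))⁻¹ * a * g.Δ ^ (k + 1) := by
      intro a; rw [pow_succ]; group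
    rw [e s, e t] at h2
    exact h2

lemma conj_list_prod (c : G) (l : List G) :
    (l.map fun s => c⁻¹ * s * c).prod = c⁻¹ * l.prod * c := by
  induction l with
  | nil => simp
  | cons a t ih => simp only [List.map_cons, List.prod_cons, ih]; group

/-- Lemma B: drop to the last factor at power 1 -/
lemma lemB : ∀ (l : List G) (hne : l ≠ []) (_ : l.Chain' g.RightWeighted)
    (_ : ∀ s ∈ l, s ∈ g.P) (x : G) (_ : x ∈ g.P)
    (_ : g.Δ⁻¹ * (l.prod * x) ∈ g.P), g.Δ⁻¹ * (l.getLast hne * x) ∈ g.P := by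
  intro l
  induction l with
  | nil => intro hne; exact absurd rfl hne
  | cons a t ih =>
    intro hne hch hP x hx h
    match t, ih with
    | [], _ => simpa using h
    | b :: t2, ih =>
      have hab : g.RightWeighted a b := (List.isChain_cons_cons.mp hch).1
      have ht2P : t2.prod * x ∈ g.P := by
        refine mul_mem (Submonoid.list_prod_mem _ ?_) hx
        intro s hs
        exact hP s (by simp [hs])
      have hd : g.Δ⁻¹ * (a * (b * (t2.prod * x))) ∈ g.P :=
        g.memP_of_eq (by simp only [List.prod_cons]; group) h
      have h2 := g.lemA hab ht2P hd
      have h3 : g.Δ⁻¹ * ((b :: t2).prod * x) ∈ g.P :=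
        g.memP_of_eq (by simp only [List.prod_cons]; group) h2
      have := ih (by simp) (List.isChain_cons_cons.mp hch).2
        (fun s hs => hP s (by simp [hs])) x hx h3
      rwa [List.getLast_cons (by simp)]

lemma conj_pow (n : ℕ) (x : G) : x ∈ g.P ↔ (g.Δ ^ n)⁻¹ * x * g.Δ ^ n ∈ g.P := by
  have := g.conj_zpow (n : ℤ) x
  rwa [zpow_natCast] at this

/-- Lemma C: if `Δ^m` divides `l.prod * x` then it divides `φ_m * x` -/
lemma lemC (m : ℕ) : ∀ (l : List G), m ≤ l.length → l.Chain' g.RightWeighted →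
    (∀ s ∈ l, s ∈ g.P) → ∀ x : G, x ∈ g.P →
    g.Δ ^ (-(m : ℤ)) * (l.prod * x) ∈ g.P →
    g.Δ ^ (-(m : ℤ)) * ((l.drop (l.length - m)).prod * x) ∈ g.P := by
  induction m with
  | zero =>
    intro l _ _ _ x hx h
    simpa [List.drop_length] using hx
  | succ m ih =>
    intro l hm hch hP x hx h
    have hm2 : m ≤ l.length := by omega
    obtain ⟨k, hk⟩ : ∃ k, l.length - m = k + 1 := ⟨l.length - (m + 1), by omega⟩
    have hkn : k + 1 ≤ l.length := by omega
    have hklt : k < l.length := by omega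
    have h0 : g.Δ ^ (-(m : ℤ)) * (l.prod * x) ∈ g.P := by
      refine g.memP_of_eq ?_ (mul_mem g.delta_pos h)
      push_cast
      group
    have hx2 := ih l hm2 hch hP x hx h0
    rw [hk] at hx2
    have hne : (l.take (k + 1)).map (fun s => (g.Δ ^ m)⁻¹ * s * g.Δ ^ m) ≠ [] := by
      intro hnil
      apply_fun List.length at hnil
      simp only [List.length_map, List.length_take, List.length_nil] at hnil
      omega
    have hchm : ((l.take (k + 1)).map (fun s => (g.Δ ^ m)⁻¹ * s * g.Δ ^ m)).Chain'
        g.RightWeighted :=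
      (List.isChain_map _).mpr ((hch.take _).imp (fun a b hab => g.lemTauPow m hab))
    have hPm : ∀ s ∈ (l.take (k + 1)).map (fun s => (g.Δ ^ m)⁻¹ * s * g.Δ ^ m), s ∈ g.P := by
      intro s hs
      obtain ⟨a, ha, rfl⟩ := List.mem_map.mp hs
      exact (g.conj_pow m a).mp (hP a (List.mem_of_mem_take ha))
    have hkey : g.Δ⁻¹ * (((l.take (k + 1)).map (fun s => (g.Δ ^ m)⁻¹ * s * g.Δ ^ m)).prod *
        (g.Δ ^ (-(m : ℤ)) * ((l.drop (k + 1)).prod * x))) ∈ g.P := by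
      refine g.memP_of_eq ?_ h
      rw [conj_list_prod,
        show l.prod = (l.take (k + 1)).prod * (l.drop (k + 1)).prod from
          (List.prod_take_mul_prod_drop _ _).symm]
      push_cast
      group
    have hlast := g.lemB _ hne hchm hPm _ hx2 hkey
    have htk : ∀ (hne2 : l.take (k + 1) ≠ []), (l.take (k + 1)).getLast hne2 = l[k] := by
      intro hne2
      rw [List.getLast_eq_getElem]
      simp only [List.length_take, Nat.min_eq_left hkn, Nat.add_sub_cancel]
      exact List.getElem_take
    rw [List.getLast_map, htk] at hlast
    rw [show l.length - (m + 1) = k from by omega, List.drop_eq_getElem_cons hklt,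
      List.prod_cons]
    refine g.memP_of_eq ?_ hlast
    push_cast
    group

/-- Lemma D: upper bound direction -/
lemma lemD (l : List G) (hP : ∀ s ∈ l, s ∈ g.P) (k : ℕ) (_hk : k ≤ l.length) (v : G)
    (h : (g.Δ ^ (k : ℤ))⁻¹ * ((l.drop (l.length - k)).prod * v) ∈ g.P) :
    (g.Δ ^ (k : ℤ))⁻¹ * (l.prod * v) ∈ g.P := by
  have h1 : (l.take (l.length - k)).prod ∈ g.P :=
    Submonoid.list_prod_mem _ (fun s hs => hP s (List.mem_of_mem_take hs))
  have h2 := (g.conj_zpow (k : ℤ) _).mp h1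
  refine g.memP_of_eq ?_ (mul_mem h2 h)
  rw [show l.prod = (l.take (l.length - k)).prod * (l.drop (l.length - k)).prod from
    (List.prod_take_mul_prod_drop _ _).symm]
  group

/-- Lemma E: `Δ^{j-r} ≼ v` whenever `Δ^j ≼ uv` and `u ≼ Δ^r` -/
lemma lemE (u v : G) (r : ℕ) (hsup : u⁻¹ * g.Δ ^ (r : ℤ) ∈ g.P) (j : ℤ)
    (hj : (g.Δ ^ j)⁻¹ * (u * v) ∈ g.P) : (g.Δ ^ (j - (r : ℤ)))⁻¹ * v ∈ g.P := by
  have h1 : g.Δ ^ (r : ℤ) * u⁻¹ ∈ g.P :=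
    g.memP_of_eq (by group) ((g.conj_zpow (-(r : ℤ)) _).mp hsup)
  have h2 := (g.conj_zpow j _).mp h1
  refine g.memP_of_eq ?_ (mul_mem h2 hj)
  group

end GarsideStructure

/-- Lemma "Lemma:Garside", first claim: if `u, v ∈ G⁰` and `r = sup(u) ≥ 1`, and `φ_k` denotes
the product of the rightmost `k` factors of the right normal form of `u`, then
`inf(uv) = max {k ∈ {0,…,r} : ∂φ_k ≼ v}`. -/
theorem garside_inf_prod_eq_max {G : Type*} [Group G] (g : GarsideStructure G)
    (u v : G) (hu : g.IsInf u 0) (hv : g.IsInf v 0)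
    (l : List G) (hl : g.IsRNF l) (hlu : l.prod = u)
    (r : ℕ) (hr : l.length = r) (hr1 : 1 ≤ r)
    (hsupu : g.IsSup u r)
    -- `φ k` is the product of the rightmost `k` factors of the right normal form of `u`,
    -- and `∂φ_k = φ_k⁻¹ Δ^k` (since `sup φ_k = k`).
    (m : ℕ) :
    g.IsInf (u * v) m ↔
      IsGreatest {k : ℕ | k ≤ r ∧ g.le (((l.drop (r - k)).prod)⁻¹ * g.Δ ^ (k : ℤ)) v} m := by
  subst hlu
  subst hr
  have hchain : l.Chain' g.RightWeighted := hl.2.1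
  have hmemP : ∀ s ∈ l, s ∈ g.P := fun s hs => (hl.1 s hs).1.1
  have hvP : v ∈ g.P := by
    have h0 := hv.1
    have h1 : (g.Δ ^ (0 : ℤ))⁻¹ * v ∈ g.P := h0
    simpa using h1
  have hsup1 : (l.prod)⁻¹ * g.Δ ^ ((l.length : ℕ) : ℤ) ∈ g.P := hsupu.1
  constructor
  · rintro ⟨h1, h2⟩
    have hle1 : (g.Δ ^ (m : ℤ))⁻¹ * (l.prod * v) ∈ g.P := h1
    have hmr : m ≤ l.length := by
      have h3 := g.lemE l.prod v l.length hsup1 (m : ℤ) hle1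
      have h4 := hv.2 _ h3
      omega
    constructor
    · refine ⟨hmr, ?_⟩
      have h5 := g.lemC m l hmr hchain hmemP v hvP (g.memP_of_eq (by group) hle1)
      exact g.memP_of_eq (by group) h5
    · intro k hk
      obtain ⟨hkr, hkv⟩ := hk
      have hkv' : ((((l.drop (l.length - k)).prod)⁻¹ * g.Δ ^ (k : ℤ)))⁻¹ * v ∈ g.P := hkv
      have h6 := g.lemD l hmemP k hkr v (g.memP_of_eq (by group) hkv')
      have h7 : g.le (g.Δ ^ (k : ℤ)) (l.prod * v) := h6
      exact_mod_cast h2 _ h7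
  · rintro ⟨⟨hmr, hmem⟩, hub⟩
    have hmem' : ((((l.drop (l.length - m)).prod)⁻¹ * g.Δ ^ (m : ℤ)))⁻¹ * v ∈ g.P := hmem
    constructor
    · exact g.lemD l hmemP m hmr v (g.memP_of_eq (by group) hmem')
    · intro j hj
      rcases le_or_gt j 0 with h0 | h0
      · exact h0.trans (Int.natCast_nonneg m)
      · lift j to ℕ using h0.le with n
        have hjle : (g.Δ ^ (n : ℤ))⁻¹ * (l.prod * v) ∈ g.P := hj
        have hnr : n ≤ l.length := by
          have h3 := g.lemE l.prod v l.length hsup1 (n : ℤ) hjle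
          have h4 := hv.2 _ h3
          omega
        have h5 := g.lemC n l hnr hchain hmemP v hvP (g.memP_of_eq (by group) hjle)
        have h6 : n ∈ {k : ℕ | k ≤ l.length ∧
            g.le (((l.drop (l.length - k)).prod)⁻¹ * g.Δ ^ (k : ℤ)) v} :=
          ⟨hnr, g.memP_of_eq (by group) h5⟩
        exact_mod_cast hub h6
end

section
/- In a Garside group G, if y is a positive absorbable element and y = u·v·w with u, v, w positive, then v is absorbable. -/
namespace GarsideStructure

variable {G : Type*} [Group G] (g : GarsideStructure G)

theorem le_trans {a b c : G} (hab : g.le a b) (hbc : g.le b c) : g.le a c := by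
  have h := mul_mem hab hbc
  rwa [show a⁻¹ * b * (b⁻¹ * c) = a⁻¹ * c by group] at h

theorem le_mul_right (a : G) {b : G} (hb : b ∈ g.P) : g.le a (a * b) := by
  rwa [le, inv_mul_cancel_left]

theorem conj_pow_mem_iff (n : ℕ) (x : G) :
    (g.Δ ^ n)⁻¹ * x * g.Δ ^ n ∈ g.P ↔ x ∈ g.P := by
  induction n with
  | zero => simp
  | succ k ih =>
    rw [← ih, g.conj_delta ((g.Δ ^ k)⁻¹ * x * g.Δ ^ k), pow_succ]
    group

theorem conj_zpow_mem_iff (j : ℤ) (x : G) :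
    (g.Δ ^ j)⁻¹ * x * g.Δ ^ j ∈ g.P ↔ x ∈ g.P := by
  obtain ⟨n, rfl | rfl⟩ := Int.eq_nat_or_neg j
  · exact_mod_cast g.conj_pow_mem_iff n x
  · rw [← g.conj_pow_mem_iff n, zpow_neg, zpow_natCast]
    group

theorem zpow_le_mul_zpow {u : G} (hu : u ∈ g.P) (j : ℤ) : g.le (g.Δ ^ j) (u * g.Δ ^ j) := by
  rw [le, ← mul_assoc]
  exact (g.conj_zpow_mem_iff j u).mpr hu

theorem zero_le_iff_mem (x : G) : g.le (g.Δ ^ (0 : ℤ)) x ↔ x ∈ g.P := by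
  simp [le]

section

variable {g}

theorem IsInf.of_le_of_le {a b c : G} {i : ℤ} (ha : g.IsInf a i) (hc : g.IsInf c i)
    (hab : g.le a b) (hbc : g.le b c) : g.IsInf b i :=
  ⟨g.le_trans ha.1 hab, fun j hj => hc.2 j (g.le_trans hj hbc)⟩

theorem IsSup.of_le_of_le {a b c : G} {s : ℤ} (ha : g.IsSup a s) (hc : g.IsSup c s)
    (hab : g.le a b) (hbc : g.le b c) : g.IsSup b s :=
  ⟨g.le_trans hbc hc.1, fun j hj => ha.2 j (g.le_trans hab hj)⟩

/-- Conjugation by `Δ^j` preserves positivity, so `Δ^j ≼ v` forces `Δ^j ≼ u Δ^j ≼ u v w`. -/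
theorem IsInf.zero_of_mul_mul {u v w : G} (huvw : g.IsInf (u * v * w) 0)
    (hu : u ∈ g.P) (hv : v ∈ g.P) (hw : w ∈ g.P) : g.IsInf v 0 := by
  refine ⟨(g.zero_le_iff_mem v).mpr hv, fun j hj => huvw.2 j ?_⟩
  have hjuv : g.le (g.Δ ^ j) (u * v) := by
    refine g.le_trans (g.zpow_le_mul_zpow hu j) ?_
    rwa [le, mul_inv_rev, mul_assoc, inv_mul_cancel_left]
  exact g.le_trans hjuv (g.le_mul_right _ hw)

end

theorem eq_one_of_mul_eq_one {u v : G} (hu : u ∈ g.P) (hv : v ∈ g.P) (huv : u * v = 1) :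
    u = 1 :=
  g.pos_antisymm u hu (by rwa [inv_eq_of_mul_eq_one_right huv])

theorem eq_one_of_isSup_zero {y : G} (hy : y ∈ g.P) (hsup : g.IsSup y 0) : y = 1 :=
  g.pos_antisymm y hy (by simpa [le] using hsup.1)

end GarsideStructure

theorem garside_absorbable_of_factor_general {G : Type*} [Group G] (g : GarsideStructure G)
    (y u v w : G) (habs : g.Absorbable y)
    (hu : u ∈ g.P) (hv : v ∈ g.P) (hw : w ∈ g.P) (hfac : y = u * v * w) :
    g.Absorbable v := by
  obtain ⟨hinf | hsup, x, i, s, hxi, hxs, hxyi, hxys⟩ := habs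
  · subst hfac
    -- `x ≼ x u ≼ x u v ≼ x u v w`, and the outer two share `inf` and `sup`.
    have h₁ : g.le x (x * u) := g.le_mul_right x hu
    have h₂ : g.le (x * u) (x * u * v) := g.le_mul_right _ hv
    have h₃ : g.le (x * u * v) (x * (u * v * w)) := by
      rw [← mul_assoc, ← mul_assoc]
      exact g.le_mul_right _ hw
    exact ⟨Or.inl (hinf.zero_of_mul_mul hu hv hw), x * u, i, s,
      hxi.of_le_of_le hxyi h₁ (g.le_trans h₂ h₃),
      hxs.of_le_of_le hxys h₁ (g.le_trans h₂ h₃),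
      hxi.of_le_of_le hxyi (g.le_trans h₁ h₂) h₃,
      hxs.of_le_of_le hxys (g.le_trans h₁ h₂) h₃⟩
  · have hy1 : y = 1 := g.eq_one_of_isSup_zero (hfac ▸ mul_mem (mul_mem hu hv) hw) hsup
    have huvw : u * (v * w) = 1 := by rw [← mul_assoc, ← hfac, hy1]
    have hu1 : u = 1 := g.eq_one_of_mul_eq_one hu (mul_mem hv hw) huvw
    have hv1 : v = 1 := g.eq_one_of_mul_eq_one hv hw (by rwa [hu1, one_mul] at huvw)
    rw [hv1, ← hy1]
    exact ⟨Or.inr hsup, x, i, s, hxi, hxs, hxyi, hxys⟩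

/-- If `y` is a positive absorbable element and `y = u·v·w` with `u, v, w` positive,
then `v` is absorbable. -/
theorem garside_absorbable_of_factor {G : Type*} [Group G] (g : GarsideStructure G)
    (y u v w : G) (hy : y ∈ g.P) (habs : g.Absorbable y)
    (hu : u ∈ g.P) (hv : v ∈ g.P) (hw : w ∈ g.P) (hfac : y = u * v * w) :
    g.Absorbable v :=
  garside_absorbable_of_factor_general g y u v w habs hu hv hw hfac
end

section
/- Let G be a Garside group and x ∈ G⁰ a rigid element whose left and right normal forms coincide and whose normal form factors other than the first and last are not single atoms, with first and last factor equal to an atom a. Let y = ∂x. If z ∈ G⁰, k ≥ 1, and y^k ≼ z, then the left normal form of z starts with k copies of the left normal form of y. -/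
/-!
Write `x = s₁ ⋯ sₙ` in left normal form. Then `∂x = x⁻¹Δⁿ` has left normal form
`∂sₙ · τ(∂sₙ₋₁) ⋯ τⁿ⁻¹(∂s₁)`, where `τ(s) = Δ⁻¹sΔ`; hence `sup x = n`, and the last factor `t`
of `y = ∂x` satisfies `∂t = τⁿ(s₁) = τⁿ(a)`, an atom.

Suppose `y · R ≼ z` with `R` positive, and let `u₁ ⋯ uₘ` and `t₁ t₂ ⋯` be the normal forms of `y`
and `z`. Always `u₁ ≼ t₁`. If `t₁ ≠ u₁`, the excess propagates along `y`: starting from `c = t₁` and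
replacing `c` by `uᵢ⁻¹(c ∨ uᵢ)` at each factor, `c` stays a nontrivial prefix of `∂uᵢ`, hence by
left-weightedness not a prefix of `uᵢ₊₁`, and at the last factor it becomes the whole atom `∂uₘ`.
So `Δ ≼ t₁ ∨ y ≼ z`, forcing `t₁ = Δ`, which a normal form excludes. Hence `t₁ = u₁`; cancelling,
the normal form of `y` is a prefix of that of `z`, and induction on `k` finishes.
-/

namespace GarsideStructure

variable {G : Type*} [Group G] (g : GarsideStructure G)

def del (s : G) : G := s⁻¹ * g.Δ

def tau : G ≃* G := MulAut.conj g.Δ⁻¹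

variable {g}

theorem tau_apply (s : G) : g.tau s = g.Δ⁻¹ * s * g.Δ := by simp [tau]

theorem tau_delta : g.tau g.Δ = g.Δ := by simp [tau_apply]

theorem tau_mem_iff {s : G} : g.tau s ∈ g.P ↔ s ∈ g.P := by
  rw [tau_apply]; exact (g.conj_delta s).symm

section Order

variable (g) in
protected theorem le_refl (x : G) : g.le x x := by simp [le, g.P.one_mem]

variable (g) in
protected theorem le_trans_s10 {x y z : G} (hxy : g.le x y) (hyz : g.le y z) : g.le x z := by
  simpa [le, mul_assoc] using g.P.mul_mem hxy hyz

variable (g) in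
protected theorem le_antisymm {x y : G} (hxy : g.le x y) (hyx : g.le y x) : x = y :=
  inv_mul_eq_one.1 (g.pos_antisymm _ hxy (by simpa [le] using hyx))

theorem eq_one_of_le_one {c : G} (hc : c ∈ g.P) (h : g.le c 1) : c = 1 :=
  g.pos_antisymm c hc (by simpa [le] using h)

theorem eq_one_of_mul_eq_one_left {u v : G} (hu : u ∈ g.P) (hv : v ∈ g.P) (h : u * v = 1) :
    u = 1 :=
  g.pos_antisymm u hu (by rwa [inv_eq_of_mul_eq_one_right h])

theorem le_mul_right_s10 {x p : G} (hp : p ∈ g.P) : g.le x (x * p) := by simpa [le] using hp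

theorem mul_le_mul_left_iff {a x y : G} : g.le (a * x) (a * y) ↔ g.le x y := by
  simp [le, mul_assoc]

theorem tau_le_tau_iff {x y : G} : g.le (g.tau x) (g.tau y) ↔ g.le x y := by
  rw [le, le, ← map_inv, ← map_mul, tau_mem_iff]

theorem delta_le_mul_delta {v : G} (hv : v ∈ g.P) : g.le g.Δ (v * g.Δ) := by
  rw [le, ← mul_assoc, ← tau_apply]; exact tau_mem_iff.2 hv

theorem le_mul_delta_inv_iff {x y : G} : g.le x (y * g.Δ⁻¹) ↔ g.le g.Δ (x⁻¹ * y) := by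
  rw [le, le, ← tau_mem_iff, tau_apply]; group

theorem delta_zpow_le_zpow {j k : ℤ} (hjk : j ≤ k) : g.le (g.Δ ^ j) (g.Δ ^ k) := by
  obtain ⟨n, hn⟩ := Int.eq_ofNat_of_zero_le (sub_nonneg.2 hjk)
  rw [le, ← zpow_neg, ← zpow_add, neg_add_eq_sub, hn, zpow_natCast]
  exact pow_mem g.delta_pos n

theorem IsSup.unique {x : G} {r s : ℤ} (hr : g.IsSup x r) (hs : g.IsSup x s) : r = s :=
  le_antisymm (hr.2 s hs.1) (hs.2 r hr.1)

end Order

section Lattice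

theorem eq_one_of_le_of_le {c e f : G} (hc : c ∈ g.P) (he : g.le c e) (hf : g.le c f)
    (h : g.wedge e f = 1) : c = 1 :=
  eq_one_of_le_one hc (h ▸ g.le_wedge e f c he hf)

theorem wedge_comm (x y : G) : g.wedge x y = g.wedge y x :=
  g.le_antisymm (g.le_wedge _ _ _ (g.wedge_le_right x y) (g.wedge_le_left x y))
    (g.le_wedge _ _ _ (g.wedge_le_right y x) (g.wedge_le_left y x))

theorem tau_wedge (x y : G) : g.tau (g.wedge x y) = g.wedge (g.tau x) (g.tau y) := by
  apply g.le_antisymm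
  · exact g.le_wedge _ _ _ (tau_le_tau_iff.2 (g.wedge_le_left x y))
      (tau_le_tau_iff.2 (g.wedge_le_right x y))
  · rw [← g.tau.apply_symm_apply (g.wedge (g.tau x) (g.tau y)), tau_le_tau_iff]
    refine g.le_wedge _ _ _ ?_ ?_ <;> change g.le _ _ <;>
      rw [← tau_le_tau_iff, MulEquiv.apply_symm_apply]
    exacts [g.wedge_le_left _ _, g.wedge_le_right _ _]

theorem inv_mul_vee_le_del {c u : G} (hc : g.le c g.Δ) (hu : g.le u g.Δ) :
    g.le (u⁻¹ * g.vee c u) (g.del u) :=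
  mul_le_mul_left_iff.2 (g.vee_le c u g.Δ hc hu)

theorem inv_mul_vee_ne_one {c u : G} (hcu : ¬ g.le c u) : u⁻¹ * g.vee c u ≠ 1 := fun h =>
  hcu (inv_mul_eq_one.1 h ▸ g.left_le_vee c u)

theorem vee_inv_mul_vee_le {c u w : G} (hw : w ∈ g.P) :
    g.le (g.vee (u⁻¹ * g.vee c u) w) (u⁻¹ * g.vee c (u * w)) := by
  refine g.vee_le _ _ _ (mul_le_mul_left_iff.2 ?_) ?_
  · exact g.vee_le _ _ _ (g.left_le_vee _ _) (g.le_trans_s10 (le_mul_right_s10 hw) (g.right_le_vee _ _))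
  · change g.le w _
    rw [← mul_le_mul_left_iff (a := u), mul_inv_cancel_left]
    exact g.right_le_vee _ _

end Lattice

section Simple

theorem mul_del (s : G) : s * g.del s = g.Δ := mul_inv_cancel_left s g.Δ

theorem del_del (s : G) : g.del (g.del s) = g.tau s := by rw [del, del, tau_apply]; group

theorem del_tau (s : G) : g.del (g.tau s) = g.tau (g.del s) := by
  rw [del, del, map_mul, map_inv, tau_delta]

theorem del_eq_one_iff {s : G} : g.del s = 1 ↔ s = g.Δ := inv_mul_eq_one

theorem del_eq_delta_iff {s : G} : g.del s = g.Δ ↔ s = 1 := by rw [del, mul_eq_right, inv_eq_one]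

theorem Simple.del {s : G} (hs : g.Simple s) : g.Simple (g.del s) :=
  ⟨hs.2, by simpa [le, GarsideStructure.del, tau_apply, mul_assoc] using tau_mem_iff.2 hs.1⟩

theorem Simple.tau {s : G} (hs : g.Simple s) : g.Simple (g.tau s) :=
  ⟨tau_mem_iff.2 hs.1, by simpa [tau_delta] using tau_le_tau_iff.2 hs.2⟩

theorem Atom.tau {a : G} (ha : g.Atom a) : g.Atom (g.tau a) := by
  refine ⟨tau_mem_iff.2 ha.1, by simpa using ha.2.1, fun u v hu hv huv => ?_⟩
  have := ha.2.2 (g.tau.symm u) (g.tau.symm v)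
    (by rwa [← tau_mem_iff, MulEquiv.apply_symm_apply])
    (by rwa [← tau_mem_iff, MulEquiv.apply_symm_apply])
    (by rw [← map_mul, huv, MulEquiv.symm_apply_apply])
  simpa using this

theorem Atom.eq_of_le {a c : G} (ha : g.Atom a) (hc : c ∈ g.P) (hca : g.le c a) (hne : c ≠ 1) :
    c = a :=
  (ha.2.2 c (c⁻¹ * a) hc hca (mul_inv_cancel_left c a)).elim (absurd · hne)
    fun h => inv_mul_eq_one.1 h

theorem LeftWeighted.wedge_del_eq_one {s t : G} (h : g.LeftWeighted s t) :
    g.wedge (g.del s) t = 1 := h.2.2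

theorem LeftWeighted.tau {s t : G} (h : g.LeftWeighted s t) :
    g.LeftWeighted (g.tau s) (g.tau t) := by
  refine ⟨h.1.tau, h.2.1.tau, ?_⟩
  change g.wedge (g.del (g.tau s)) (g.tau t) = 1
  rw [del_tau, ← tau_wedge, h.wedge_del_eq_one, map_one]

theorem LeftWeighted.del_tau_del {s t : G} (h : g.LeftWeighted s t) :
    g.LeftWeighted (g.del t) (g.tau (g.del s)) := by
  refine ⟨h.2.1.del, h.1.del.tau, ?_⟩
  change g.wedge (g.del (g.del t)) (g.tau (g.del s)) = 1
  rw [del_del, ← tau_wedge, wedge_comm, h.wedge_del_eq_one, map_one]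

theorem LeftWeighted.ne_delta_right {s t : G} (h : g.LeftWeighted s t) (hs : s ≠ g.Δ) :
    t ≠ g.Δ := by
  rintro rfl
  exact hs (del_eq_one_iff.1
    (eq_one_of_le_of_le h.1.del.1 (g.le_refl _) h.1.del.2 h.wedge_del_eq_one))

end Simple

section NormalForm

variable {l : List G}

theorem IsLNF.simple (hl : g.IsLNF l) {s : G} (hs : s ∈ l) : g.Simple s := (hl.1 s hs).1

theorem IsLNF.prod_mem (hl : g.IsLNF l) : l.prod ∈ g.P :=
  list_prod_mem fun _ hs => (hl.simple hs).1

theorem IsLNF.tail (hl : g.IsLNF l) : g.IsLNF l.tail := by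
  cases l with
  | nil => exact hl
  | cons t L =>
    exact ⟨fun s hs => hl.1 s (List.mem_cons_of_mem t hs), hl.2.1.tail,
      fun u hu => (hl.2.1.rel_head? hu).ne_delta_right (hl.2.2 t rfl)⟩

theorem IsLNF.drop (hl : g.IsLNF l) (n : ℕ) : g.IsLNF (l.drop n) := by
  induction n with
  | zero => exact hl
  | succ n ih => rw [← List.tail_drop]; exact ih.tail

theorem IsLNF.ne_delta (hl : g.IsLNF l) {s : G} (hs : s ∈ l) : s ≠ g.Δ := by
  induction l with
  | nil => cases hs
  | cons t L ih =>
    rcases List.mem_cons.1 hs with rfl | hs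
    · exact hl.2.2 s rfl
    · exact ih hl.tail hs

theorem IsLNF.prod_eq_one_iff (hl : g.IsLNF l) : l.prod = 1 ↔ l = [] := by
  refine ⟨fun h => ?_, fun h => h ▸ List.prod_nil⟩
  cases l with
  | nil => rfl
  | cons t L =>
    rw [List.prod_cons] at h
    exact absurd (eq_one_of_mul_eq_one_left (hl.simple List.mem_cons_self).1 hl.tail.prod_mem h)
      (hl.1 t List.mem_cons_self).2

theorem IsLNF.head_le_prod {t : G} {L : List G} (hl : g.IsLNF (t :: L)) :
    g.le t (t :: L).prod := by
  rw [List.prod_cons]; exact le_mul_right_s10 hl.tail.prod_mem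

theorem IsLNF.le_head_of_le_prod {t d : G} {L : List G} (hl : g.IsLNF (t :: L))
    (hd : g.le d g.Δ) (h : g.le d (t :: L).prod) : g.le d t := by
  induction L generalizing t d with
  | nil => simpa using h
  | cons u L ih =>
    have htu : g.LeftWeighted t u := List.isChain_cons_cons.1 hl.2.1 |>.1
    have ht := hl.simple List.mem_cons_self
    -- `e` is what `t ∨ d` adds to `t`: a prefix of both `∂t` and `u`, hence trivial
    set e := t⁻¹ * g.vee t d
    have he : g.le e (u :: L).prod := by
      rw [← mul_le_mul_left_iff (a := t), mul_inv_cancel_left, ← List.prod_cons]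
      exact g.vee_le _ _ _ (le_mul_right_s10 hl.tail.prod_mem) h
    have heΔ : g.le e (g.del t) := mul_le_mul_left_iff.2 (g.vee_le t d g.Δ ht.2 hd)
    have he1 : e = 1 := eq_one_of_le_of_le (g.left_le_vee t d) heΔ
      (ih hl.tail (g.le_trans_s10 heΔ ht.del.2) he) htu.wedge_del_eq_one
    rw [inv_mul_eq_one] at he1
    exact he1 ▸ g.right_le_vee t d

theorem IsLNF.not_delta_le_prod (hl : g.IsLNF l) (hne : l ≠ []) : ¬ g.le g.Δ l.prod := by
  cases l with
  | nil => exact absurd rfl hne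
  | cons t L =>
    exact fun h => hl.ne_delta List.mem_cons_self <|
      g.le_antisymm (hl.simple List.mem_cons_self).2 (hl.le_head_of_le_prod (g.le_refl _) h)

theorem IsLNF.eq_of_prod_eq {l' : List G} (hl : g.IsLNF l) (hl' : g.IsLNF l')
    (h : l.prod = l'.prod) : l = l' := by
  induction l generalizing l' with
  | nil => exact (hl'.prod_eq_one_iff.1 (by rw [← h, List.prod_nil])).symm
  | cons s L ih =>
    cases l' with
    | nil => exact hl.prod_eq_one_iff.1 h
    | cons t L' =>
      have hst : s = t := g.le_antisymm
        (hl'.le_head_of_le_prod (hl.simple List.mem_cons_self).2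
          (h ▸ hl.head_le_prod))
        (hl.le_head_of_le_prod (hl'.simple List.mem_cons_self).2 (h ▸ hl'.head_le_prod))
      subst hst
      rw [List.prod_cons, List.prod_cons, mul_left_cancel_iff] at h
      rw [ih (l' := L') hl.tail hl'.tail h]

end NormalForm

section Prefix

theorem IsLNF.delta_le_vee_prod {u c : G} {w : List G} (hw : g.IsLNF (u :: w))
    (hlast : ∀ z ∈ (u :: w).getLast?, g.Atom (g.del z)) (hc : g.Simple c) (hcu : ¬ g.le c u) :
    g.le g.Δ (g.vee c (u :: w).prod) := by
  induction w generalizing u c with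
  | nil =>
    have hu := hw.simple List.mem_cons_self
    have h := (hlast u rfl).eq_of_le (g.right_le_vee c u) (inv_mul_vee_le_del hc.2 hu.2)
      (inv_mul_vee_ne_one hcu)
    rw [inv_mul_eq_iff_eq_mul, mul_del] at h
    rw [List.prod_singleton, h]
    exact g.le_refl _
  | cons u₂ w ih =>
    have hu := hw.simple List.mem_cons_self
    have hc₁ := inv_mul_vee_le_del hc.2 hu.2
    have hc₁u₂ : ¬ g.le (u⁻¹ * g.vee c u) u₂ := fun h =>
      inv_mul_vee_ne_one hcu <| eq_one_of_le_of_le (g.right_le_vee c u) hc₁ h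
        (List.isChain_cons_cons.1 hw.2.1).1.wedge_del_eq_one
    have hΔ := ih hw.tail (fun z hz => hlast z (List.mem_getLast?_cons hz))
      ⟨g.right_le_vee c u, g.le_trans_s10 hc₁ hu.del.2⟩ hc₁u₂
    have hΔ' : g.le (u * g.Δ) (g.vee c (u :: u₂ :: w).prod) := by
      rw [← mul_le_mul_left_iff (a := u⁻¹), inv_mul_cancel_left, List.prod_cons]
      exact g.le_trans_s10 hΔ (vee_inv_mul_vee_le hw.tail.prod_mem)
    exact g.le_trans_s10 (delta_le_mul_delta hu.1) hΔ'

theorem IsLNF.prefix_of_prod_mul_le {V L : List G} {R : G} (hV : g.IsLNF V) (hL : g.IsLNF L)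
    (hlast : ∀ z ∈ V.getLast?, g.Atom (g.del z)) (hR : R ∈ g.P)
    (hle : g.le (V.prod * R) L.prod) : V <+: L := by
  induction V generalizing L with
  | nil => exact List.nil_prefix
  | cons v V ih =>
    cases L with
    | nil =>
      have h := eq_one_of_le_one (g.P.mul_mem hV.prod_mem hR) hle
      exact absurd (hV.prod_eq_one_iff.1 (eq_one_of_mul_eq_one_left hV.prod_mem hR h))
        (List.cons_ne_nil v V)
    | cons t L =>
      have hVL : g.le (v :: V).prod (t :: L).prod := g.le_trans_s10 (le_mul_right_s10 hR) hle
      have ht := hL.simple List.mem_cons_self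
      have htv : t = v := by
        have hvt : g.le v t := hL.le_head_of_le_prod (hV.simple List.mem_cons_self).2 <|
          g.le_trans_s10 hV.head_le_prod hVL
        by_contra hne
        have hΔ := hV.delta_le_vee_prod hlast ht fun h => hne (g.le_antisymm h hvt)
        have hΔt : g.le g.Δ t := hL.le_head_of_le_prod (g.le_refl _) <| g.le_trans_s10 hΔ <|
          g.vee_le _ _ _ hL.head_le_prod hVL
        exact hL.ne_delta List.mem_cons_self (g.le_antisymm ht.2 hΔt)
      subst htv
      rw [List.prod_cons, List.prod_cons, mul_assoc, mul_le_mul_left_iff] at hle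
      exact List.cons_prefix_cons.2
        ⟨rfl, ih hV.tail hL.tail (fun z hz => hlast z (List.mem_getLast?_cons hz)) hle⟩

theorem IsLNF.flatten_replicate_prefix_of_pow_le {V L : List G} (hV : g.IsLNF V)
    (hL : g.IsLNF L) (hlast : ∀ z ∈ V.getLast?, g.Atom (g.del z)) (k : ℕ)
    (hle : g.le (V.prod ^ k) L.prod) : (List.replicate k V).flatten <+: L := by
  induction k generalizing L with
  | zero => exact List.nil_prefix
  | succ k ih =>
    rw [pow_succ'] at hle
    obtain ⟨L', rfl⟩ := hV.prefix_of_prod_mul_le hL hlast (pow_mem hV.prod_mem k) hle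
    rw [List.prod_append, mul_le_mul_left_iff] at hle
    have hL' : g.IsLNF L' := by simpa using hL.drop V.length
    rw [List.replicate_succ, List.flatten_cons, List.prefix_append_right_inj]
    exact ih hL' hle

end Prefix

section Complement

variable (g) in
/-- Applied to the factors `[sₙ, …, s₁]` of `x = s₁ ⋯ sₙ` listed backwards, this gives the factors
`[∂sₙ, τ(∂sₙ₋₁), …, τⁿ⁻¹(∂s₁)]` of `∂x = x⁻¹Δⁿ`. -/
def complementFactors : List G → List G
  | [] => []
  | s :: m => g.del s :: (complementFactors m).map g.tau

theorem complementFactors_prod (m : List G) :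
    (g.complementFactors m).prod = m.reverse.prod⁻¹ * g.Δ ^ m.length := by
  induction m with
  | nil => simp [complementFactors]
  | cons s m ih =>
    rw [complementFactors, List.prod_cons, ← map_list_prod, ih, tau_apply, del]
    simp only [List.reverse_cons, List.prod_append, List.prod_singleton, List.length_cons, pow_succ]
    group

@[simp]
theorem length_complementFactors (m : List G) : (g.complementFactors m).length = m.length := by
  induction m with
  | nil => rfl
  | cons s m ih => simp [complementFactors, ih]

theorem isChain_complementFactors {m : List G}
    (hm : m.IsChain fun s t => g.LeftWeighted t s) :
    (g.complementFactors m).IsChain g.LeftWeighted := by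
  induction m with
  | nil => exact List.isChain_nil
  | cons s m ih =>
    refine List.isChain_cons.2 ⟨fun z hz => ?_, (List.isChain_map _).2 (ih hm.tail |>.imp
      fun _ _ h => h.tau)⟩
    cases m with
    | nil => cases hz
    | cons s' m =>
      obtain rfl : z = g.tau (g.del s') := by simpa [complementFactors] using hz.symm
      exact (List.isChain_cons_cons.1 hm).1.del_tau_del

theorem mem_complementFactors {m : List G} (hm : ∀ s ∈ m, g.Simple s ∧ s ≠ g.Δ) :
    ∀ z ∈ g.complementFactors m, g.Simple z ∧ z ≠ 1 := by
  induction m with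
  | nil => intro z hz; cases hz
  | cons s m ih =>
    intro z hz
    rcases List.mem_cons.1 hz with rfl | hz
    · obtain ⟨hs, hsΔ⟩ := hm s List.mem_cons_self
      exact ⟨hs.del, mt del_eq_one_iff.1 hsΔ⟩
    · obtain ⟨z', hz', rfl⟩ := List.mem_map.1 hz
      obtain ⟨hz's, hz'1⟩ := ih (fun s hs => hm s (List.mem_cons_of_mem _ hs)) z' hz'
      exact ⟨hz's.tau, by simpa using hz'1⟩

theorem atom_del_of_mem_getLast?_complementFactors {m : List G}
    (hm : ∀ s ∈ m.getLast?, g.Atom s) :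
    ∀ z ∈ (g.complementFactors m).getLast?, g.Atom (g.del z) := by
  induction m with
  | nil => intro z hz; cases hz
  | cons s m ih =>
    intro z hz
    cases m with
    | nil =>
      obtain rfl : z = g.del s := by simpa [complementFactors] using hz.symm
      exact del_del s ▸ (hm s rfl).tau
    | cons s' m =>
      have hlast : (g.complementFactors (s :: s' :: m)).getLast? =
          ((g.complementFactors (s' :: m)).map g.tau).getLast? := List.getLast?_cons_cons
      rw [hlast, List.getLast?_map] at hz
      obtain ⟨z, hz', rfl⟩ := Option.mem_map.1 hz
      exact del_tau z ▸ (ih (fun t ht => hm t (List.mem_getLast?_cons ht)) z hz').tau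

theorem IsLNF.complementFactors {l : List G} (hl : g.IsLNF l) :
    g.IsLNF (g.complementFactors l.reverse) := by
  refine ⟨mem_complementFactors fun s hs => ?_, isChain_complementFactors ?_, fun z hz => ?_⟩
  · rw [List.mem_reverse] at hs
    exact ⟨hl.simple hs, hl.ne_delta hs⟩
  · exact List.isChain_reverse.2 hl.2.1
  · cases hl' : l.reverse with
    | nil => simp [hl', GarsideStructure.complementFactors] at hz
    | cons s m =>
      obtain rfl : z = g.del s := by simpa [hl', GarsideStructure.complementFactors] using hz.symm
      have hs : s ∈ l := List.mem_reverse.1 (hl' ▸ List.mem_cons_self)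
      exact mt del_eq_delta_iff.1 (hl.1 s hs).2

theorem IsLNF.isSup_prod {l : List G} (hl : g.IsLNF l) (hne : l ≠ []) :
    g.IsSup l.prod l.length := by
  have hD := hl.complementFactors
  have hprod : (g.complementFactors l.reverse).prod = l.prod⁻¹ * g.Δ ^ (l.length : ℤ) := by
    rw [complementFactors_prod, List.reverse_reverse, List.length_reverse, zpow_natCast]
  refine ⟨show _ ∈ g.P from hprod ▸ hD.prod_mem, fun j hj => ?_⟩
  by_contra! hlt
  have hle : g.le l.prod (g.Δ ^ (l.length : ℤ) * g.Δ⁻¹) :=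
    zpow_sub_one g.Δ (l.length : ℤ) ▸ g.le_trans_s10 hj (delta_zpow_le_zpow (by omega))
  refine hD.not_delta_le_prod ?_ (hprod ▸ le_mul_delta_inv_iff.1 hle)
  simpa [← List.length_pos_iff] using hne

end Complement

end GarsideStructure

theorem garside_lnf_starts_with_complement_power_general {G : Type*} [Group G]
    (g : GarsideStructure G)
    (x : G) (a : G) (ha : g.Atom a)
    (l : List G) (hlnf : g.IsLNF l) (hprod : l.prod = x)
    (hhead : l.head? = some a)
    (r : ℤ) (hsup : g.IsSup x r)
    (y : G) (hy : y = x⁻¹ * g.Δ ^ r)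
    (z : G) (k : ℕ) (hdvd : g.le (y ^ k) z) :
    ∀ L ly : List G, g.IsLNF L → L.prod = z → g.IsLNF ly → ly.prod = y →
      (List.replicate k ly).flatten <+: L := by
  intro L ly hL hLz hly hlyy
  have hr : r = l.length :=
    hsup.unique (hprod ▸ hlnf.isSup_prod (List.ne_nil_of_mem (List.mem_of_mem_head? hhead)))
  obtain rfl : ly = g.complementFactors l.reverse := hly.eq_of_prod_eq hlnf.complementFactors <| by
    rw [hlyy, hy, hr, GarsideStructure.complementFactors_prod, List.reverse_reverse,
      List.length_reverse, hprod, zpow_natCast]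
  refine hly.flatten_replicate_prefix_of_pow_le hL
    (GarsideStructure.atom_del_of_mem_getLast?_complementFactors ?_) k (hlyy ▸ hLz ▸ hdvd)
  rw [List.getLast?_reverse, hhead]
  simpa using ha

/-- Lemma "L:InitialFinalFactors"(b): with `x` as before (rigid, coinciding normal forms,
no interior factor a single atom, first and last factor the atom `a`) and `y = ∂x`:
if `z ∈ G⁰`, `k ≥ 1` and `y^k ≼ z`, then the left normal form of `z` starts with `k` copies
of the left normal form of `y`. -/
theorem garside_lnf_starts_with_complement_power {G : Type*} [Group G]
    (g : GarsideStructure G)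
    (x : G) (hx : g.IsInf x 0) (a : G) (ha : g.Atom a)
    (l : List G) (hlnf : g.IsLNF l) (hrnf : g.IsRNF l) (hprod : l.prod = x)
    (hne : l ≠ []) (hhead : l.head? = some a) (hlast : l.getLast? = some a)
    (hrigid : g.LeftWeighted a a)
    (hinterior : ∀ s ∈ (l.drop 1).dropLast, ¬ g.Atom s)
    (r : ℤ) (hsup : g.IsSup x r)
    (y : G) (hy : y = x⁻¹ * g.Δ ^ r)
    (z : G) (hz : g.IsInf z 0) (k : ℕ) (hk : 1 ≤ k) (hdvd : g.le (y ^ k) z) :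
    ∀ L ly : List G, g.IsLNF L → L.prod = z → g.IsLNF ly → ly.prod = y →
      (List.replicate k ly).flatten <+: L :=
  garside_lnf_starts_with_complement_power_general g x a ha l hlnf hprod hhead r hsup y hy z k hdvd
end

section
/- Let G be a group acting by isometries on a δ-hyperbolic space X with basepoint P, equipped with an automatic normal form whose normal form paths are unparameterized quasi-geodesics staying within distance M of geodesics between their endpoints. Suppose g ∈ G is rigid (its normal form is cyclically in normal form) and the normal form of g contains a subword representing an element h with d(P, h·P) > 5M. Then g acts loxodromically on X (in particular neither elliptically nor parabolically). -/
/-! Rigidity makes the normal form of `g ^ (n + 1)` the normal form of `g ^ n` followed by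
that of `g`, so the normal-form path from `P` to `g ^ (n + 1) • P` passes through `g ^ n • P`.
That point lies within `M` of a geodesic from `P` to `g ^ (n + 1) • P`, whence
`d(P, gⁿP) + d(P, gP) ≤ d(P, gⁿ⁺¹P) + 2M`. The same estimate applied to the two ends of the
subword shows `d(P, gP) > 3M`, so every power of `g` adds at least `d(P, gP) - 2M > 0` to the
displacement of `P`, and the orbit grows linearly. -/

open Set

section Geodesic

variable {X : Type*} [PseudoMetricSpace X]

def IsGeodesicSegment (c : ℝ → X) (x y : X) : Prop :=
  c 0 = x ∧ c (dist x y) = y ∧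
    ∀ s ∈ Icc (0 : ℝ) (dist x y), ∀ t ∈ Icc (0 : ℝ) (dist x y), dist (c s) (c t) = |s - t|

namespace IsGeodesicSegment

variable {c : ℝ → X} {x y q q' : X} {s t M : ℝ}

lemma dist_left_eq (hc : IsGeodesicSegment c x y) (ht : t ∈ Icc 0 (dist x y)) :
    dist x (c t) = t := by
  rw [← hc.1, hc.2.2 0 ⟨le_rfl, dist_nonneg⟩ t ht, zero_sub, abs_neg, abs_of_nonneg ht.1]

lemma dist_right_eq (hc : IsGeodesicSegment c x y) (ht : t ∈ Icc 0 (dist x y)) :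
    dist (c t) y = dist x y - t := by
  calc dist (c t) y = dist (c t) (c (dist x y)) := by rw [hc.2.1]
    _ = dist x y - t := by
      rw [hc.2.2 t ht _ ⟨dist_nonneg, le_rfl⟩, abs_sub_comm, abs_of_nonneg (sub_nonneg.2 ht.2)]

lemma dist_le (hc : IsGeodesicSegment c x y) (hs : s ∈ Icc 0 (dist x y))
    (ht : t ∈ Icc 0 (dist x y)) : dist (c s) (c t) ≤ dist x y := by
  rw [hc.2.2 s hs t ht, abs_le]
  constructor <;> linarith [hs.1, hs.2, ht.1, ht.2]

lemma dist_add_dist_le_of_dist_le (hc : IsGeodesicSegment c x y) (ht : t ∈ Icc 0 (dist x y))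
    (hq : dist q (c t) ≤ M) : dist x q + dist q y ≤ dist x y + 2 * M := by
  calc dist x q + dist q y ≤ (dist x (c t) + dist (c t) q) + (dist q (c t) + dist (c t) y) :=
        add_le_add (dist_triangle _ _ _) (dist_triangle _ _ _)
    _ ≤ dist x y + 2 * M := by
        rw [hc.dist_left_eq ht, hc.dist_right_eq ht, dist_comm (c t) q]
        linarith

lemma dist_le_of_dist_le (hc : IsGeodesicSegment c x y) (hs : s ∈ Icc 0 (dist x y))
    (ht : t ∈ Icc 0 (dist x y)) (hq : dist q (c s) ≤ M) (hq' : dist q' (c t) ≤ M) :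
    dist q q' ≤ dist x y + 2 * M := by
  calc dist q q' ≤ dist q (c s) + dist (c s) (c t) + dist (c t) q' := dist_triangle4 _ _ _ _
    _ ≤ dist x y + 2 * M := by
        rw [dist_comm (c t) q']
        linarith [hc.dist_le hs ht]

end IsGeodesicSegment

end Geodesic

lemma List.prod_flatten_replicate {G : Type*} [Monoid G] (l : List G) (n : ℕ) :
    (List.replicate n l).flatten.prod = l.prod ^ n := by
  simp [List.prod_flatten, List.map_replicate, List.prod_replicate]

lemma List.take_flatten_replicate_add {α : Type*} (l : List α) (m k : ℕ) :
    (List.replicate (m + k) l).flatten.take (m * l.length) = (List.replicate m l).flatten := by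
  rw [List.replicate_add, List.flatten_append, List.take_left']
  simp [List.length_flatten, List.map_replicate, List.sum_replicate]

lemma natCast_mul_le_of_add_le_succ {f : ℕ → ℝ} {a : ℝ} (h0 : 0 ≤ f 0)
    (hstep : ∀ n, f n + a ≤ f (n + 1)) (n : ℕ) : n * a ≤ f n := by
  induction n with
  | zero => simpa using h0
  | succ n ih =>
    push_cast
    linarith [hstep n]

section NormalForm

variable {G X : Type*} [Group G] [PseudoMetricSpace X] [MulAction G X]

def NormalFormPathsNearGeodesics (P : X) (nf : G → List G) (M : ℝ) : Prop :=
  ∀ (γ : G) (k : ℕ) (c : ℝ → X), IsGeodesicSegment c P (γ • P) →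
    ∃ t ∈ Icc (0 : ℝ) (dist P (γ • P)), dist (((nf γ).take k).prod • P) (c t) ≤ M

def IsRigid (nf : G → List G) (g : G) : Prop :=
  ∀ n : ℕ, nf (g ^ n) = (List.replicate n (nf g)).flatten

variable {P : X} {nf : G → List G} {M : ℝ}

lemma dist_add_dist_take_prod_smul_le (hgeo : ∀ x y : X, ∃ c, IsGeodesicSegment c x y)
    (hM : NormalFormPathsNearGeodesics P nf M) (γ : G) (k : ℕ) :
    dist P (((nf γ).take k).prod • P) + dist (((nf γ).take k).prod • P) (γ • P) ≤
      dist P (γ • P) + 2 * M := by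
  obtain ⟨c, hc⟩ := hgeo P (γ • P)
  obtain ⟨t, ht, hq⟩ := hM γ k c hc
  exact hc.dist_add_dist_le_of_dist_le ht hq

lemma dist_take_prod_smul_le (hgeo : ∀ x y : X, ∃ c, IsGeodesicSegment c x y)
    (hM : NormalFormPathsNearGeodesics P nf M) (γ : G) (j k : ℕ) :
    dist (((nf γ).take j).prod • P) (((nf γ).take k).prod • P) ≤ dist P (γ • P) + 2 * M := by
  obtain ⟨c, hc⟩ := hgeo P (γ • P)
  obtain ⟨s, hs, hq⟩ := hM γ j c hc
  obtain ⟨t, ht, hq'⟩ := hM γ k c hc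
  exact hc.dist_le_of_dist_le hs ht hq hq'

lemma dist_smul_subword_le [IsIsometricSMul G X]
    (hgeo : ∀ x y : X, ∃ c, IsGeodesicSegment c x y) (hM : NormalFormPathsNearGeodesics P nf M)
    {γ : G} {l₁ lh l₂ : List G} (hsplit : nf γ = l₁ ++ lh ++ l₂) :
    dist P (lh.prod • P) ≤ dist P (γ • P) + 2 * M := by
  have h := dist_take_prod_smul_le hgeo hM γ l₁.length (l₁ ++ lh).length
  rwa [hsplit, List.take_left, List.append_assoc, List.take_left, List.prod_append, mul_smul,
    dist_smul] at h

lemma IsRigid.prod_take_nf_pow_add (hnf : ∀ γ : G, (nf γ).prod = γ) {g : G} (hg : IsRigid nf g)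
    (m k : ℕ) : ((nf (g ^ (m + k))).take (m * (nf g).length)).prod = g ^ m := by
  rw [hg, List.take_flatten_replicate_add, List.prod_flatten_replicate, hnf]

lemma IsRigid.dist_pow_smul_add_le [IsIsometricSMul G X]
    (hgeo : ∀ x y : X, ∃ c, IsGeodesicSegment c x y) (hM : NormalFormPathsNearGeodesics P nf M)
    (hnf : ∀ γ : G, (nf γ).prod = γ) {g : G} (hg : IsRigid nf g) (n : ℕ) :
    dist P ((g ^ n) • P) + dist P (g • P) ≤ dist P ((g ^ (n + 1)) • P) + 2 * M := by
  have h := dist_add_dist_take_prod_smul_le hgeo hM (g ^ (n + 1)) (n * (nf g).length)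
  have hstep : dist ((g ^ n) • P) ((g ^ (n + 1)) • P) = dist P (g • P) := by
    rw [pow_succ, mul_smul, dist_smul]
  rwa [hg.prod_take_nf_pow_add hnf n 1, hstep] at h

lemma dist_inv_smul_eq [IsIsometricSMul G X] (a : G) (x : X) :
    dist x (a⁻¹ • x) = dist x (a • x) := by
  rw [← dist_smul a, smul_inv_smul, dist_comm]

lemma mul_abs_le_dist_zpow_smul [IsIsometricSMul G X] {g : G} {x : X} {A : ℝ}
    (h : ∀ n : ℕ, n * A ≤ dist x ((g ^ n) • x)) (n : ℤ) :
    A * |(n : ℝ)| ≤ dist x ((g ^ n) • x) := by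
  obtain ⟨m, rfl | rfl⟩ := Int.eq_nat_or_neg n
  · simpa [mul_comm] using h m
  · simpa [mul_comm, zpow_neg, dist_inv_smul_eq] using h m

end NormalForm

theorem rigid_with_big_subword_is_loxodromic_general
    {G : Type*} [Group G] {X : Type*} [MetricSpace X] [MulAction G X]
    (hiso : ∀ γ : G, Isometry (fun p : X => γ • p))
    -- X is geodesic
    (hgeo : ∀ x y : X, ∃ c : ℝ → X, c 0 = x ∧ c (dist x y) = y ∧
      ∀ s ∈ Set.Icc (0 : ℝ) (dist x y), ∀ t ∈ Set.Icc (0 : ℝ) (dist x y),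
        dist (c s) (c t) = |s - t|)
    -- basepoint and the automatic normal form
    (P : X) (nf : G → List G) (hnf : ∀ γ : G, (nf γ).prod = γ)
    -- geodesic words hypothesis: normal form paths stay within `M` of geodesics
    (Mc : ℝ) (hMc : 0 ≤ Mc)
    (hM : ∀ (γ : G) (k : ℕ) (c : ℝ → X), c 0 = P → c (dist P (γ • P)) = γ • P →
      (∀ s ∈ Set.Icc (0 : ℝ) (dist P (γ • P)), ∀ t ∈ Set.Icc (0 : ℝ) (dist P (γ • P)),
        dist (c s) (c t) = |s - t|) →
      ∃ t ∈ Set.Icc (0 : ℝ) (dist P (γ • P)), dist (((nf γ).take k).prod • P) (c t) ≤ Mc)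
    -- `g` is rigid
    (g : G) (hrigid : ∀ n : ℕ, nf (g ^ n) = (List.replicate n (nf g)).flatten)
    -- the normal form of `g` contains a subword moving the basepoint more than `5M`
    (hsub : ∃ l₁ lh l₂ : List G, nf g = l₁ ++ lh ++ l₂ ∧ 5 * Mc < dist P (lh.prod • P)) :
    -- `g` acts loxodromically (its orbit is a quasi-isometric embedding of ℤ)
    ∃ A B : ℝ, 0 < A ∧ ∀ n : ℤ, A * |(n : ℝ)| - B ≤ dist P ((g ^ n) • P) := by
  obtain ⟨l₁, lh, l₂, hsplit, hbig⟩ := hsub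
  have : IsIsometricSMul G X := ⟨hiso⟩
  have hnear : NormalFormPathsNearGeodesics P nf Mc := fun γ k c hc => hM γ k c hc.1 hc.2.1 hc.2.2
  have hsubword := dist_smul_subword_le hgeo hnear hsplit
  refine ⟨dist P (g • P) - 2 * Mc, 0, by linarith, fun n => ?_⟩
  rw [sub_zero]
  refine mul_abs_le_dist_zpow_smul (natCast_mul_le_of_add_le_succ (by simp) fun n => ?_) n
  linarith [IsRigid.dist_pow_smul_add_le hgeo hnear hnf hrigid n]

/-- Wiest's lemma: let `G` act by isometries on a `δ`-hyperbolic geodesic space `X` with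
basepoint `P`, equipped with an automatic normal form `nf` whose normal form paths stay
within distance `M` of geodesics between their endpoints.  If `g` is rigid (its normal
form is cyclically in normal form, i.e. the normal form of `g^n` is `n` copies of that of
`g`) and the normal form of `g` contains a subword representing an element `h` with
`d(P, h·P) > 5M`, then `g` acts loxodromically on `X`. -/
theorem rigid_with_big_subword_is_loxodromic
    {G : Type*} [Group G] {X : Type*} [MetricSpace X] [MulAction G X]
    (hiso : ∀ γ : G, Isometry (fun p : X => γ • p))
    -- δ-hyperbolicity (four-point condition)
    (δ : ℝ) (hδ : 0 ≤ δ)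
    (hhyp : ∀ x y z w : X,
      dist x y + dist z w ≤ max (dist x z + dist y w) (dist x w + dist y z) + 2 * δ)
    -- X is geodesic
    (hgeo : ∀ x y : X, ∃ c : ℝ → X, c 0 = x ∧ c (dist x y) = y ∧
      ∀ s ∈ Set.Icc (0 : ℝ) (dist x y), ∀ t ∈ Set.Icc (0 : ℝ) (dist x y),
        dist (c s) (c t) = |s - t|)
    -- basepoint and the automatic normal form
    (P : X) (nf : G → List G) (hnf : ∀ γ : G, (nf γ).prod = γ)
    -- geodesic words hypothesis: normal form paths stay within `M` of geodesics
    (Mc : ℝ) (hMc : 0 ≤ Mc)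
    (hM : ∀ (γ : G) (k : ℕ) (c : ℝ → X), c 0 = P → c (dist P (γ • P)) = γ • P →
      (∀ s ∈ Set.Icc (0 : ℝ) (dist P (γ • P)), ∀ t ∈ Set.Icc (0 : ℝ) (dist P (γ • P)),
        dist (c s) (c t) = |s - t|) →
      ∃ t ∈ Set.Icc (0 : ℝ) (dist P (γ • P)), dist (((nf γ).take k).prod • P) (c t) ≤ Mc)
    -- `g` is rigid
    (g : G) (hrigid : ∀ n : ℕ, nf (g ^ n) = (List.replicate n (nf g)).flatten)
    -- the normal form of `g` contains a subword moving the basepoint more than `5M`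
    (hsub : ∃ l₁ lh l₂ : List G, nf g = l₁ ++ lh ++ l₂ ∧ 5 * Mc < dist P (lh.prod • P)) :
    -- `g` acts loxodromically (its orbit is a quasi-isometric embedding of ℤ)
    ∃ A B : ℝ, 0 < A ∧ ∀ n : ℤ, A * |(n : ℝ)| - B ≤ dist P ((g ^ n) • P) :=
  rigid_with_big_subword_is_loxodromic_general hiso hgeo P nf hnf Mc hMc hM g hrigid hsub
end
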